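/- arXiv:1908.04657 — 3 statements merged into one kernel-verified Lean document; each statement's English description precedes it below -/
import Mathlib

section
/- For any planar C² vector field u = (u₁,u₂) that is divergence-free (u₁ₓ + u₂ᵧ = 0) and has spatially constant scalar vorticity (∂ₓ(u₂ₓ − u₁ᵧ) = ∂ᵧ(u₂ₓ − u₁ᵧ) = 0), the Jacobian matrix of the advective acceleration (u·∇)u is symmetric. -/
/-!
Write `a = u₁`, `b = u₂`. By the product rule the difference of the two off-diagonal entries is
`a (a_xy - b_xx) + b (a_yy - b_xy) + (a_x + b_y)(a_y - b_x)`.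
After exchanging the mixed partials of `a` and `b` (Schwarz), the first two brackets are the
partial derivatives of the vorticity `b_x - a_y` up to sign, and the last factor `a_x + b_y` is
the divergence.
-/

noncomputable def pd1 (f : ℝ → ℝ → ℝ) (x y : ℝ) : ℝ := deriv (fun x' => f x' y) x
noncomputable def pd2 (f : ℝ → ℝ → ℝ) (x y : ℝ) : ℝ := deriv (fun y' => f x y') y

open Function

section Slices

variable {E : Type*} [NormedAddCommGroup E] [NormedSpace ℝ E] {G : ℝ × ℝ → E} {x y : ℝ}

theorem DifferentiableAt.hasDerivAt_slice_fst (hG : DifferentiableAt ℝ G (x, y)) :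
    HasDerivAt (fun x' => G (x', y)) (fderiv ℝ G (x, y) (1, 0)) x :=
  hG.hasFDerivAt.comp_hasDerivAt x ((hasDerivAt_id x).prodMk (hasDerivAt_const x y))

theorem DifferentiableAt.hasDerivAt_slice_snd (hG : DifferentiableAt ℝ G (x, y)) :
    HasDerivAt (fun y' => G (x, y')) (fderiv ℝ G (x, y) (0, 1)) y :=
  hG.hasFDerivAt.comp_hasDerivAt y ((hasDerivAt_const y x).prodMk (hasDerivAt_id y))

end Slices

section PartialDerivatives

variable {f g : ℝ → ℝ → ℝ} {x y : ℝ}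

theorem pd1_eq_fderiv (hf : DifferentiableAt ℝ (uncurry f) (x, y)) :
    pd1 f x y = fderiv ℝ (uncurry f) (x, y) (1, 0) :=
  hf.hasDerivAt_slice_fst.deriv

theorem pd2_eq_fderiv (hf : DifferentiableAt ℝ (uncurry f) (x, y)) :
    pd2 f x y = fderiv ℝ (uncurry f) (x, y) (0, 1) :=
  hf.hasDerivAt_slice_snd.deriv

theorem pd1_add (hf : DifferentiableAt ℝ (uncurry f) (x, y))
    (hg : DifferentiableAt ℝ (uncurry g) (x, y)) :
    pd1 (fun a b => f a b + g a b) x y = pd1 f x y + pd1 g x y :=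
  deriv_add hf.hasDerivAt_slice_fst.differentiableAt hg.hasDerivAt_slice_fst.differentiableAt

theorem pd2_add (hf : DifferentiableAt ℝ (uncurry f) (x, y))
    (hg : DifferentiableAt ℝ (uncurry g) (x, y)) :
    pd2 (fun a b => f a b + g a b) x y = pd2 f x y + pd2 g x y :=
  deriv_add hf.hasDerivAt_slice_snd.differentiableAt hg.hasDerivAt_slice_snd.differentiableAt

theorem pd1_sub (hf : DifferentiableAt ℝ (uncurry f) (x, y))
    (hg : DifferentiableAt ℝ (uncurry g) (x, y)) :
    pd1 (fun a b => f a b - g a b) x y = pd1 f x y - pd1 g x y :=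
  deriv_sub hf.hasDerivAt_slice_fst.differentiableAt hg.hasDerivAt_slice_fst.differentiableAt

theorem pd2_sub (hf : DifferentiableAt ℝ (uncurry f) (x, y))
    (hg : DifferentiableAt ℝ (uncurry g) (x, y)) :
    pd2 (fun a b => f a b - g a b) x y = pd2 f x y - pd2 g x y :=
  deriv_sub hf.hasDerivAt_slice_snd.differentiableAt hg.hasDerivAt_slice_snd.differentiableAt

theorem pd1_mul (hf : DifferentiableAt ℝ (uncurry f) (x, y))
    (hg : DifferentiableAt ℝ (uncurry g) (x, y)) :
    pd1 (fun a b => f a b * g a b) x y = pd1 f x y * g x y + f x y * pd1 g x y :=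
  deriv_mul hf.hasDerivAt_slice_fst.differentiableAt hg.hasDerivAt_slice_fst.differentiableAt

theorem pd2_mul (hf : DifferentiableAt ℝ (uncurry f) (x, y))
    (hg : DifferentiableAt ℝ (uncurry g) (x, y)) :
    pd2 (fun a b => f a b * g a b) x y = pd2 f x y * g x y + f x y * pd2 g x y :=
  deriv_mul hf.hasDerivAt_slice_snd.differentiableAt hg.hasDerivAt_slice_snd.differentiableAt

theorem ContDiff.uncurry_pd1 {m n : WithTop ℕ∞} (hf : ContDiff ℝ n (uncurry f))
    (hmn : m + 1 ≤ n) : ContDiff ℝ m (uncurry (pd1 f)) := by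
  have hdiff : Differentiable ℝ (uncurry f) :=
    hf.differentiable (ne_bot_of_le_ne_bot (by simp) hmn)
  have : uncurry (pd1 f) = fun p => fderiv ℝ (uncurry f) p (1, 0) :=
    funext fun p => pd1_eq_fderiv (hdiff p)
  rw [this]
  exact (hf.fderiv_right hmn).clm_apply contDiff_const

theorem ContDiff.uncurry_pd2 {m n : WithTop ℕ∞} (hf : ContDiff ℝ n (uncurry f))
    (hmn : m + 1 ≤ n) : ContDiff ℝ m (uncurry (pd2 f)) := by
  have hdiff : Differentiable ℝ (uncurry f) :=
    hf.differentiable (ne_bot_of_le_ne_bot (by simp) hmn)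
  have : uncurry (pd2 f) = fun p => fderiv ℝ (uncurry f) p (0, 1) :=
    funext fun p => pd2_eq_fderiv (hdiff p)
  rw [this]
  exact (hf.fderiv_right hmn).clm_apply contDiff_const

theorem pd2_pd1_comm (hf : ContDiff ℝ 2 (uncurry f)) (x y : ℝ) :
    pd2 (pd1 f) x y = pd1 (pd2 f) x y := by
  have hdiff : Differentiable ℝ (uncurry f) := hf.differentiable two_ne_zero
  have hD : DifferentiableAt ℝ (fderiv ℝ (uncurry f)) (x, y) :=
    (hf.fderiv_right (m := 1) le_rfl).differentiable one_ne_zero _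
  have h₁ : HasDerivAt (fun y' => pd1 f x y')
      (fderiv ℝ (fderiv ℝ (uncurry f)) (x, y) (0, 1) (1, 0)) y := by
    simpa only [pd1_eq_fderiv (hdiff _), map_zero, add_zero] using
      hD.hasDerivAt_slice_snd.clm_apply (hasDerivAt_const y ((1, 0) : ℝ × ℝ))
  have h₂ : HasDerivAt (fun x' => pd2 f x' y)
      (fderiv ℝ (fderiv ℝ (uncurry f)) (x, y) (1, 0) (0, 1)) x := by
    simpa only [pd2_eq_fderiv (hdiff _), map_zero, add_zero] using
      hD.hasDerivAt_slice_fst.clm_apply (hasDerivAt_const x ((0, 1) : ℝ × ℝ))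
  rw [pd2, h₁.deriv, pd1, h₂.deriv]
  exact (hf.contDiffAt.isSymmSndFDerivAt (by simp)) _ _

end PartialDerivatives

/-- for a planar C² vector field `u = (u₁,u₂)` that is divergence-free
and has spatially constant scalar vorticity, the Jacobian matrix of the advective
acceleration `(u·∇)u` is symmetric (its off-diagonal entries are equal). -/
theorem advective_acceleration_jacobian_symmetric
    (u₁ u₂ : ℝ → ℝ → ℝ)
    (hu₁ : ContDiff ℝ 2 (fun p : ℝ × ℝ => u₁ p.1 p.2))
    (hu₂ : ContDiff ℝ 2 (fun p : ℝ × ℝ => u₂ p.1 p.2))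
    (hdiv : ∀ x y, pd1 u₁ x y + pd2 u₂ x y = 0)
    (hvortx : ∀ x y, pd1 (fun a b => pd1 u₂ a b - pd2 u₁ a b) x y = 0)
    (hvorty : ∀ x y, pd2 (fun a b => pd1 u₂ a b - pd2 u₁ a b) x y = 0)
    (x y : ℝ) :
    pd2 (fun a b => u₁ a b * pd1 u₁ a b + u₂ a b * pd2 u₁ a b) x y =
    pd1 (fun a b => u₁ a b * pd1 u₂ a b + u₂ a b * pd2 u₂ a b) x y := by
  have d₁ : DifferentiableAt ℝ (uncurry u₁) (x, y) := hu₁.differentiable two_ne_zero _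
  have d₂ : DifferentiableAt ℝ (uncurry u₂) (x, y) := hu₂.differentiable two_ne_zero _
  have d₁₁ := (hu₁.uncurry_pd1 (m := 1) le_rfl).differentiable one_ne_zero (x, y)
  have d₁₂ := (hu₁.uncurry_pd2 (m := 1) le_rfl).differentiable one_ne_zero (x, y)
  have d₂₁ := (hu₂.uncurry_pd1 (m := 1) le_rfl).differentiable one_ne_zero (x, y)
  have d₂₂ := (hu₂.uncurry_pd2 (m := 1) le_rfl).differentiable one_ne_zero (x, y)
  have hvx := hvortx x y
  have hvy := hvorty x y
  rw [pd1_sub d₂₁ d₁₂] at hvx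
  rw [pd2_sub d₂₁ d₁₂] at hvy
  rw [pd2_add, pd2_mul d₁ d₁₁, pd2_mul d₂ d₁₂, pd1_add, pd1_mul d₁ d₂₁, pd1_mul d₂ d₂₂,
    pd2_pd1_comm hu₁, ← pd2_pd1_comm hu₂]
  · linear_combination (pd2 u₁ x y - pd1 u₂ x y) * hdiv x y - u₁ x y * hvx - u₂ x y * hvy
  exacts [d₁.mul d₂₁, d₂.mul d₂₂, d₁.mul d₁₁, d₂.mul d₁₂]
end

section
/- If |ω − C| > 2, then every solution of the autonomous linear system ẏ = By with B having rows (0, 1 + (C−ω)/2) and (1 − (C−ω)/2, 0) is bounded for all time (indeed periodic); consequently every solution x(t) = M(t)y(t) of the nonautonomous system ẋ = A(t)x (with A(t) as in the rotating-frame decomposition) remains bounded for all time. -/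
/-!
Since `B² = -κ² I` with `κ² = ((C - ω)/2)² - 1 > 0`, uniqueness for linear ODEs forces every
solution of `ẏ = By` to be `y t = cos (κ t) y₀ + (sin (κ t) / κ) B y₀`, which is bounded and
`2π/κ`-periodic. For `ẋ = A(t)x`, the identity `A = Ṁ M⁻¹ + M B M⁻¹` says exactly that
`y = M⁻¹ x` solves `ẏ = By`; as the rotations `M t` are uniformly bounded, so is `x = M y`.
-/

open Matrix

noncomputable def Bmat (C ω : ℝ) : Matrix (Fin 2) (Fin 2) ℝ :=
  !![0, 1 + (C - ω) / 2; 1 - (C - ω) / 2, 0]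

noncomputable def Amat (C ω t : ℝ) : Matrix (Fin 2) (Fin 2) ℝ :=
  !![-Real.sin (C * t), Real.cos (C * t) - ω / 2;
     Real.cos (C * t) + ω / 2, Real.sin (C * t)]

open Real

section LinearSystem

variable {n : Type*} [Fintype n] {B : Matrix n n ℝ}

theorem eq_of_hasDerivAt_mulVec {y z : ℝ → n → ℝ} (t₀ : ℝ)
    (hy : ∀ t, HasDerivAt y (B *ᵥ y t) t) (hz : ∀ t, HasDerivAt z (B *ᵥ z t) t)
    (h₀ : y t₀ = z t₀) : y = z :=
  ODE_solution_unique_univ (v := fun _ ↦ (mulVecLin B).toContinuousLinearMap)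
    (s := fun _ ↦ Set.univ) (fun _ ↦ (ContinuousLinearMap.lipschitz _).lipschitzOnWith)
    (fun t ↦ ⟨hy t, trivial⟩) (fun t ↦ ⟨hz t, trivial⟩) h₀

theorem hasDerivAt_cos_smul_add_sin_smul_mulVec [DecidableEq n] {κ : ℝ} (hκ : κ ≠ 0)
    (hB : B * B = -κ ^ 2 • 1) (v : n → ℝ) (t : ℝ) :
    HasDerivAt (fun s ↦ cos (κ * s) • v + (sin (κ * s) / κ) • (B *ᵥ v))
      (B *ᵥ (cos (κ * t) • v + (sin (κ * t) / κ) • (B *ᵥ v))) t := by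
  have hlin : HasDerivAt (fun s ↦ κ * s) κ t := by
    simpa using (hasDerivAt_id t).const_mul κ
  have hBB : B *ᵥ (B *ᵥ v) = -κ ^ 2 • v := by
    rw [mulVec_mulVec, hB, smul_mulVec, one_mulVec]
  refine ((hlin.cos.smul_const v).add ((hlin.sin.div_const κ).smul_const (B *ᵥ v))).congr_deriv ?_
  rw [mulVec_add, mulVec_smul, mulVec_smul, hBB, smul_smul]
  ext i
  simp only [Pi.add_apply, Pi.smul_apply, smul_eq_mul]
  field_simp
  ring

theorem eq_cos_smul_add_sin_smul_of_hasDerivAt_mulVec [DecidableEq n] {κ : ℝ} (hκ : κ ≠ 0)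
    (hB : B * B = -κ ^ 2 • 1) {y : ℝ → n → ℝ} (hy : ∀ t, HasDerivAt y (B *ᵥ y t) t) (t : ℝ) :
    y t = cos (κ * t) • y 0 + (sin (κ * t) / κ) • (B *ᵥ y 0) :=
  congrFun (eq_of_hasDerivAt_mulVec 0 hy
    (hasDerivAt_cos_smul_add_sin_smul_mulVec hκ hB (y 0)) (by simp)) t

variable [DecidableEq n] {κ : ℝ} (hκ : 0 < κ) (hB : B * B = -κ ^ 2 • 1) {y : ℝ → n → ℝ}
  (hy : ∀ t, HasDerivAt y (B *ᵥ y t) t)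
include hκ hB hy

theorem norm_le_of_hasDerivAt_mulVec (t : ℝ) : ‖y t‖ ≤ ‖y 0‖ + ‖B *ᵥ y 0‖ / κ := by
  rw [eq_cos_smul_add_sin_smul_of_hasDerivAt_mulVec hκ.ne' hB hy t]
  refine (norm_add_le _ _).trans (add_le_add ?_ ?_)
  · rw [norm_smul]
    exact mul_le_of_le_one_left (norm_nonneg _) (abs_cos_le_one _)
  · rw [norm_smul, norm_div, Real.norm_of_nonneg hκ.le, div_mul_eq_mul_div]
    gcongr
    exact mul_le_of_le_one_left (norm_nonneg _) (abs_sin_le_one _)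

theorem periodic_of_hasDerivAt_mulVec : Function.Periodic y (2 * π / κ) := fun t ↦ by
  rw [eq_cos_smul_add_sin_smul_of_hasDerivAt_mulVec hκ.ne' hB hy (t + _),
    eq_cos_smul_add_sin_smul_of_hasDerivAt_mulVec hκ.ne' hB hy t, mul_add,
    mul_div_cancel₀ _ hκ.ne', cos_add_two_pi, sin_add_two_pi]

end LinearSystem

theorem HasDerivAt.matrix_mulVec {m n : Type*} [Fintype n] {N : ℝ → Matrix m n ℝ}
    {N' : Matrix m n ℝ} {x : ℝ → n → ℝ} {x' : n → ℝ} {t : ℝ}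
    (hN : ∀ i j, HasDerivAt (fun s ↦ N s i j) (N' i j) t) (hx : HasDerivAt x x' t) :
    HasDerivAt (fun s ↦ N s *ᵥ x s) (N' *ᵥ x t + N t *ᵥ x') t := by
  rw [hasDerivAt_pi]
  intro i
  have := HasDerivAt.fun_sum (u := Finset.univ) fun j _ ↦ (hN i j).mul (hasDerivAt_pi.1 hx j)
  simpa only [mulVec, dotProduct, Pi.add_apply, Pi.mul_apply, Finset.sum_add_distrib] using this

theorem hasDerivAt_mulVec_of_gauge {n : Type*} [Fintype n] {A N : ℝ → Matrix n n ℝ}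
    {N' : ℝ → Matrix n n ℝ} {B : Matrix n n ℝ} {x : ℝ → n → ℝ}
    (hx : ∀ t, HasDerivAt x (A t *ᵥ x t) t)
    (hN : ∀ t i j, HasDerivAt (fun s ↦ N s i j) (N' t i j) t)
    (hgauge : ∀ t, N' t + N t * A t = B * N t) (t : ℝ) :
    HasDerivAt (fun s ↦ N s *ᵥ x s) (B *ᵥ (N t *ᵥ x t)) t := by
  refine ((hx t).matrix_mulVec (hN t)).congr_deriv ?_
  rw [mulVec_mulVec, mulVec_mulVec, ← hgauge, add_mulVec]

noncomputable def rotationMatrix (θ : ℝ) : Matrix (Fin 2) (Fin 2) ℝ :=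
  !![cos θ, -sin θ; sin θ, cos θ]

theorem rotationMatrix_mul_rotationMatrix (a b : ℝ) :
    rotationMatrix a * rotationMatrix b = rotationMatrix (a + b) := by
  ext i j
  fin_cases i <;> fin_cases j <;>
    simp [rotationMatrix, mul_apply, Fin.sum_univ_two, cos_add, sin_add] <;> ring

theorem rotationMatrix_zero : rotationMatrix 0 = 1 := by
  ext i j
  fin_cases i <;> fin_cases j <;> simp [rotationMatrix]

theorem norm_rotationMatrix_mulVec_le (θ : ℝ) (v : Fin 2 → ℝ) :
    ‖rotationMatrix θ *ᵥ v‖ ≤ 2 * ‖v‖ := by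
  have hcomb : ∀ a b : ℝ, |a| ≤ 1 → |b| ≤ 1 → ‖a * v 0 + b * v 1‖ ≤ 2 * ‖v‖ := by
    intro a b ha hb
    have hv0 := norm_le_pi_norm v 0
    have hv1 := norm_le_pi_norm v 1
    calc ‖a * v 0 + b * v 1‖ ≤ |a| * ‖v 0‖ + |b| * ‖v 1‖ := by
          simpa only [norm_mul, Real.norm_eq_abs] using norm_add_le (a * v 0) (b * v 1)
      _ ≤ 1 * ‖v‖ + 1 * ‖v‖ := by gcongr
      _ = 2 * ‖v‖ := by ring
  rw [pi_norm_le_iff_of_nonneg (by positivity), Fin.forall_fin_two]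
  constructor
  · simpa [rotationMatrix, vecHead, vecTail, sub_eq_add_neg] using
      hcomb (cos θ) (-sin θ) (abs_cos_le_one θ) (by simpa using abs_sin_le_one θ)
  · simpa [rotationMatrix, vecHead, vecTail] using
      hcomb (sin θ) (cos θ) (abs_sin_le_one θ) (abs_cos_le_one θ)

theorem hasDerivAt_rotationMatrix_apply (a t : ℝ) (i j : Fin 2) :
    HasDerivAt (fun s ↦ rotationMatrix (a * s) i j)
      ((a • rotationMatrix (a * t + π / 2)) i j) t := by
  have hlin : HasDerivAt (fun s ↦ a * s) a t := by
    simpa using (hasDerivAt_id t).const_mul a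
  fin_cases i <;> fin_cases j
  · simpa [rotationMatrix, mul_comm a, cos_add_pi_div_two, sin_add_pi_div_two] using hlin.cos
  · simpa [rotationMatrix, mul_comm a, cos_add_pi_div_two, sin_add_pi_div_two] using hlin.sin.fun_neg
  · simpa [rotationMatrix, mul_comm a, cos_add_pi_div_two, sin_add_pi_div_two] using hlin.sin
  · simpa [rotationMatrix, mul_comm a, cos_add_pi_div_two, sin_add_pi_div_two] using hlin.cos

/-- With `N t = (M t)⁻¹ = rotationMatrix (-(C t / 2))`, this is `A = Ṁ M⁻¹ + M B M⁻¹`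
multiplied by `N` on the left. -/
theorem rotationMatrix_gauge_Amat (C ω t : ℝ) :
    -(C / 2) • rotationMatrix (-(C / 2) * t + π / 2) + rotationMatrix (-(C / 2) * t) * Amat C ω t
      = Bmat C ω * rotationMatrix (-(C / 2) * t) := by
  have hCt : C * t = 2 * (C / 2 * t) := by ring
  ext i j
  fin_cases i <;> fin_cases j <;>
    simp [rotationMatrix, Amat, Bmat, mul_apply, Fin.sum_univ_two, hCt, cos_two_mul,
      sin_two_mul, cos_add_pi_div_two, sin_add_pi_div_two]
  · ring
  · linear_combination 2 * cos (C / 2 * t) * sin_sq_add_cos_sq (C / 2 * t)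
  · linear_combination 2 * cos (C / 2 * t) * sin_sq_add_cos_sq (C / 2 * t)
  · ring

theorem Bmat_mul_Bmat (C ω : ℝ) : Bmat C ω * Bmat C ω = -(((C - ω) / 2) ^ 2 - 1) • 1 := by
  ext i j
  fin_cases i <;> fin_cases j <;> simp [Bmat, mul_apply, Fin.sum_univ_two] <;> ring

theorem exists_Bmat_mul_Bmat_eq_neg_sq {C ω : ℝ} (h : 2 < |ω - C|) :
    ∃ κ : ℝ, 0 < κ ∧ Bmat C ω * Bmat C ω = -κ ^ 2 • 1 := by
  have hd : 1 < ((C - ω) / 2) ^ 2 := by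
    rw [one_lt_sq_iff_one_lt_abs, abs_div, abs_sub_comm]
    norm_num
    linarith
  refine ⟨√(((C - ω) / 2) ^ 2 - 1), Real.sqrt_pos.2 (by linarith), ?_⟩
  rw [Real.sq_sqrt (by linarith), Bmat_mul_Bmat]

/-- if `|ω − C| > 2`, every solution of `ẏ = By` is bounded for all
time (indeed periodic), and consequently every solution of the nonautonomous
system `ẋ = A(t)x` remains bounded for all time. -/
theorem center_case_bounded_solutions (C ω : ℝ) (h : |ω - C| > 2) :
    (∀ y : ℝ → (Fin 2 → ℝ),
      (∀ t, HasDerivAt y ((Bmat C ω).mulVec (y t)) t) →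
      (∃ R : ℝ, ∀ t, ‖y t‖ ≤ R) ∧ (∃ T > 0, ∀ t, y (t + T) = y t)) ∧
    (∀ x : ℝ → (Fin 2 → ℝ),
      (∀ t, HasDerivAt x ((Amat C ω t).mulVec (x t)) t) →
      ∃ R : ℝ, ∀ t, ‖x t‖ ≤ R) := by
  obtain ⟨κ, hκ, hB⟩ := exists_Bmat_mul_Bmat_eq_neg_sq h
  have hBsol : ∀ y : ℝ → (Fin 2 → ℝ), (∀ t, HasDerivAt y (Bmat C ω *ᵥ y t) t) →
      (∃ R : ℝ, ∀ t, ‖y t‖ ≤ R) ∧ (∃ T > 0, ∀ t, y (t + T) = y t) := fun y hy ↦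
    ⟨⟨_, norm_le_of_hasDerivAt_mulVec hκ hB hy⟩,
      ⟨2 * π / κ, by positivity, periodic_of_hasDerivAt_mulVec hκ hB hy⟩⟩
  refine ⟨hBsol, fun x hx ↦ ?_⟩
  obtain ⟨⟨R, hR⟩, -⟩ := hBsol _ <| hasDerivAt_mulVec_of_gauge hx
    (N' := fun t ↦ -(C / 2) • rotationMatrix (-(C / 2) * t + π / 2))
    (hasDerivAt_rotationMatrix_apply _) (rotationMatrix_gauge_Amat C ω)
  refine ⟨2 * R, fun t ↦ ?_⟩
  have hx_eq : x t = rotationMatrix (C / 2 * t) *ᵥ (rotationMatrix (-(C / 2) * t) *ᵥ x t) := by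
    rw [mulVec_mulVec, rotationMatrix_mul_rotationMatrix, neg_mul, add_neg_cancel,
      rotationMatrix_zero, one_mulVec]
  calc ‖x t‖ ≤ 2 * ‖rotationMatrix (-(C / 2) * t) *ᵥ x t‖ :=
        (congrArg norm hx_eq).trans_le (norm_rotationMatrix_mulVec_le _ _)
    _ ≤ 2 * R := by gcongr; exact hR t
end

section
/- Let J be a trace-free real 2×2 matrix with symmetric part S and antisymmetric part W, and let J̃ be the 3×3 matrix obtained by embedding J in the upper-left block with zeros elsewhere, with symmetric part S̃ and antisymmetric part W̃. Then the intermediate eigenvalue of the symmetric matrix S̃² + W̃² satisfies λ₂(S̃² + W̃²) = S₁₁² + S₁₂² − W₁₂² = −Q, where Q = (‖W̃‖² − ‖S̃‖²)/2. -/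
open Matrix

/-- Embedding of a 2×2 matrix in the upper-left block of a 3×3 matrix. -/
def embed3 (J : Matrix (Fin 2) (Fin 2) ℝ) : Matrix (Fin 3) (Fin 3) ℝ :=
  !![J 0 0, J 0 1, 0; J 1 0, J 1 1, 0; 0, 0, 0]

lemma div_two_eq_smul {n : ℕ} (A : Matrix (Fin n) (Fin n) ℝ) :
    A / 2 = (2 : ℝ)⁻¹ • A := by
  have h2 : (2 : Matrix (Fin n) (Fin n) ℝ) = (2 : ℝ) • 1 := by
    rw [Matrix.smul_one_eq_diagonal]; exact (Matrix.diagonal_ofNat 2).symm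
  have hinv : (2 : Matrix (Fin n) (Fin n) ℝ)⁻¹ = (2 : ℝ)⁻¹ • 1 := by
    rw [h2, Matrix.inv_smul (2 : ℝ) (A := 1) (by simp)]
    simp [invOf_eq_inv]
  rw [div_eq_mul_inv, hinv, Matrix.mul_smul, mul_one]

set_option maxHeartbeats 2000000 in
/-- for a trace-free 2×2 matrix `J` with symmetric part `S` and
antisymmetric part `W`, embedded as `J̃` into 3×3 with symmetric/antisymmetric
parts `S̃, W̃`, the intermediate eigenvalue of `S̃² + W̃²` equals
`S₁₁² + S₁₂² − W₁₂² = −Q`, where `Q = (‖W̃‖² − ‖S̃‖²)/2` (Frobenius norms). -/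
theorem lambda2_eq_neg_Q (J : Matrix (Fin 2) (Fin 2) ℝ) (hJ : J.trace = 0) :
    ∃ l₁ l₂ l₃ : ℝ, l₁ ≥ l₂ ∧ l₂ ≥ l₃ ∧
      (∀ x : ℝ,
        (x • (1 : Matrix (Fin 3) (Fin 3) ℝ) -
          ((embed3 J + (embed3 J)ᵀ) / 2 * ((embed3 J + (embed3 J)ᵀ) / 2) +
           (embed3 J - (embed3 J)ᵀ) / 2 * ((embed3 J - (embed3 J)ᵀ) / 2))).det =
        (x - l₁) * (x - l₂) * (x - l₃)) ∧
      l₂ = (((J + Jᵀ) / 2) 0 0) ^ 2 + (((J + Jᵀ) / 2) 0 1) ^ 2 - (((J - Jᵀ) / 2) 0 1) ^ 2 ∧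
      l₂ = -(((∑ i, ∑ j, (((embed3 J - (embed3 J)ᵀ) / 2) i j) ^ 2) -
              (∑ i, ∑ j, (((embed3 J + (embed3 J)ᵀ) / 2) i j) ^ 2)) / 2) := by
  obtain ⟨p, q, r, rfl⟩ : ∃ p q r : ℝ, J = !![p, q; r, -p] := by
    refine ⟨J 0 0, J 0 1, J 1 0, ?_⟩
    have h11 : J 1 1 = -(J 0 0) := by
      have h := hJ
      simp [Matrix.trace, Fin.sum_univ_two, Matrix.diag] at h
      linarith
    rw [← h11]; exact Matrix.eta_fin_two J
  clear hJ
  obtain ⟨b, hb⟩ : ∃ y : ℝ, y = (q + r) / 2 := ⟨_, rfl⟩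
  obtain ⟨w, hw⟩ : ∃ y : ℝ, y = (q - r) / 2 := ⟨_, rfl⟩
  have hS : (embed3 !![p, q; r, -p] + (embed3 !![p, q; r, -p])ᵀ) / 2 =
      !![p, b, 0; b, -p, 0; 0, 0, 0] := by
    rw [div_two_eq_smul]
    ext i j
    fin_cases i <;> fin_cases j <;>
      simp [embed3, hb, Matrix.vecHead, Matrix.vecTail] <;> ring
  have hW : (embed3 !![p, q; r, -p] - (embed3 !![p, q; r, -p])ᵀ) / 2 =
      !![0, w, 0; -w, 0, 0; 0, 0, 0] := by
    rw [div_two_eq_smul]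
    ext i j
    fin_cases i <;> fin_cases j <;>
      simp [embed3, hw, Matrix.vecHead, Matrix.vecTail] <;> ring
  obtain ⟨c, hc⟩ : ∃ y : ℝ, y = p ^ 2 + b ^ 2 - w ^ 2 := ⟨_, rfl⟩
  have hM : (!![p, b, 0; b, -p, 0; 0, 0, 0] : Matrix (Fin 3) (Fin 3) ℝ) *
        !![p, b, 0; b, -p, 0; 0, 0, 0] +
      (!![0, w, 0; -w, 0, 0; 0, 0, 0] : Matrix (Fin 3) (Fin 3) ℝ) *
        !![0, w, 0; -w, 0, 0; 0, 0, 0] = !![c, 0, 0; 0, c, 0; 0, 0, 0] := by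
    ext i j
    fin_cases i <;> fin_cases j <;>
      simp [Matrix.mul_apply, Fin.sum_univ_three, Matrix.vecHead, Matrix.vecTail, hc] <;> ring
  refine ⟨max c 0, c, min c 0, le_max_left _ _, min_le_left _ _, ?_, ?_, ?_⟩
  · intro x
    have hmm : (x - max c 0) * (x - c) * (x - min c 0) = (x - c) * (x - c) * x := by
      rcases le_total c 0 with h | h
      · rw [max_eq_right h, min_eq_left h]; ring
      · rw [max_eq_left h, min_eq_right h]; ring
    rw [hmm, hS, hW, hM]
    have hX : x • (1 : Matrix (Fin 3) (Fin 3) ℝ) - !![c, 0, 0; 0, c, 0; 0, 0, 0] =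
        !![x - c, 0, 0; 0, x - c, 0; 0, 0, x] := by
      ext i j
      fin_cases i <;> fin_cases j <;>
        simp [Matrix.one_apply, Matrix.vecHead, Matrix.vecTail]
    rw [hX, Matrix.det_fin_three]
    simp
  · have e1 : ((!![p, q; r, -p] + (!![p, q; r, -p] : Matrix (Fin 2) (Fin 2) ℝ)ᵀ) / 2) 0 0 = p := by
      rw [div_two_eq_smul]; simp [Matrix.vecHead, Matrix.vecTail]; ring
    have e2 : ((!![p, q; r, -p] + (!![p, q; r, -p] : Matrix (Fin 2) (Fin 2) ℝ)ᵀ) / 2) 0 1 = b := by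
      rw [div_two_eq_smul]; simp [hb, Matrix.vecHead, Matrix.vecTail]; ring
    have e3 : ((!![p, q; r, -p] - (!![p, q; r, -p] : Matrix (Fin 2) (Fin 2) ℝ)ᵀ) / 2) 0 1 = w := by
      rw [div_two_eq_smul]; simp [hw, Matrix.vecHead, Matrix.vecTail]; ring
    rw [e1, e2, e3]; exact hc
  · rw [hS, hW]
    simp [Fin.sum_univ_succ]
    rw [hc]; ring
end
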